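/- arXiv:2604.14127 — 2 statements merged into one kernel-verified Lean document; each statement's English description precedes it below -/
import Mathlib

section
/- Let $a_1, \dots, a_n$ be holomorphic functions on a connected open subset $U \subseteq \mathbb{C}$. If the Wronskian determinant $\operatorname{Wr}(a_1, \dots, a_n)$ vanishes identically on $U$, then the functions $a_1, \dots, a_n$ are linearly dependent over $\mathbb{C}$. -/
/-!
Induction on `n`. If the Wronskian of `a 0, …, a (n-1)` vanishes on `U`, the induction hypothesis
applies to them. Otherwise it is nonzero near some `z₀`, and there Cramer's rule gives analytic
coefficients `d i` with `∑ i, d i * (a i)⁽ᵏ⁾ = (a n)⁽ᵏ⁾` for `k < n`; the vanishing of the full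
Wronskian extends this to `k = n`. Differentiating the identity for `k` and subtracting the one
for `k + 1` leaves `∑ i, (d i)' * (a i)⁽ᵏ⁾ = 0` for `k < n`, so `d' = 0`. Thus `d` is constant
near `z₀`, and the identity theorem spreads the relation `a n = ∑ i, d i * a i` over `U`.
-/

open Matrix Filter Topology

section AnalyticMatrix

variable {𝕜 E ι : Type*} [NontriviallyNormedField 𝕜] [NormedAddCommGroup E] [NormedSpace 𝕜 E]
  [Fintype ι] [DecidableEq ι] {s : Set E} {A : E → Matrix ι ι 𝕜}

theorem AnalyticOnNhd.matrix_det (hA : ∀ i j, AnalyticOnNhd 𝕜 (fun z => A z i j) s) :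
    AnalyticOnNhd 𝕜 (fun z => (A z).det) s := by
  simp only [det_apply, Units.smul_def, zsmul_eq_mul]
  exact Finset.analyticOnNhd_fun_sum _ fun σ _ =>
    analyticOnNhd_const.mul (Finset.analyticOnNhd_fun_prod _ fun i _ => hA (σ i) i)

theorem AnalyticOnNhd.matrix_inv (hA : ∀ i j, AnalyticOnNhd 𝕜 (fun z => A z i j) s)
    (hdet : ∀ z ∈ s, (A z).det ≠ 0) (i j : ι) :
    AnalyticOnNhd 𝕜 (fun z => (A z)⁻¹ i j) s := by
  simp only [inv_def, Ring.inverse_eq_inv', Matrix.smul_apply, adjugate_apply, smul_eq_mul]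
  refine ((AnalyticOnNhd.matrix_det hA).inv hdet).mul (AnalyticOnNhd.matrix_det fun k l => ?_)
  rcases eq_or_ne k j with rfl | hk
  · simpa using analyticOnNhd_const
  · simpa [updateRow_ne hk] using hA k l

end AnalyticMatrix

protected theorem AnalyticOnNhd.iteratedDeriv {𝕜 F : Type*} [NontriviallyNormedField 𝕜]
    [NormedAddCommGroup F] [NormedSpace 𝕜 F] [CompleteSpace F] {f : 𝕜 → F} {s : Set 𝕜}
    (hf : AnalyticOnNhd 𝕜 f s) (k : ℕ) : AnalyticOnNhd 𝕜 (iteratedDeriv k f) s := by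
  induction k with
  | zero => simpa using hf
  | succ k ih => simpa only [iteratedDeriv_succ] using ih.deriv

theorem sum_deriv_mul_eq_zero_of_eventuallyEq {𝕜 ι : Type*} [NontriviallyNormedField 𝕜]
    [Fintype ι] {d f : ι → 𝕜 → 𝕜} {g : 𝕜 → 𝕜} {z : 𝕜}
    (hd : ∀ i, DifferentiableAt 𝕜 (d i) z) (hf : ∀ i, DifferentiableAt 𝕜 (f i) z)
    (h : ∀ᶠ w in 𝓝 z, ∑ i, d i w * f i w = g w)
    (h' : ∑ i, d i z * deriv (f i) z = deriv g z) :
    ∑ i, deriv (d i) z * f i z = 0 := by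
  have hsum : HasDerivAt (fun w => ∑ i, d i w * f i w)
      (∑ i, (deriv (d i) z * f i z + d i z * deriv (f i) z)) z :=
    HasDerivAt.fun_sum fun i _ => (hd i).hasDerivAt.mul (hf i).hasDerivAt
  have hg := hsum.deriv.symm.trans (EventuallyEq.deriv_eq h)
  rw [Finset.sum_add_distrib, h'] at hg
  linear_combination hg

theorem Matrix.vecMul_submatrix_castSucc_eq_of_det_eq_zero {K : Type*} [Field K] {n : ℕ}
    {A : Matrix (Fin (n + 1)) (Fin (n + 1)) K} (hA : A.det = 0)
    (hM : (A.submatrix Fin.castSucc Fin.castSucc).det ≠ 0) {d : Fin n → K}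
    (hd : d ᵥ* A.submatrix Fin.castSucc Fin.castSucc = fun j => A (Fin.last n) j.castSucc) :
    d ᵥ* A.submatrix Fin.castSucc id = A (Fin.last n) := by
  obtain ⟨v, hv0, hv⟩ := exists_vecMul_eq_zero_iff.2 hA
  set w : Fin n → K := fun i => v i.castSucc
  have hsplit : ∀ j, (w ᵥ* A.submatrix Fin.castSucc id) j + v (Fin.last n) * A (Fin.last n) j = 0 :=
    fun j => by simpa [vecMul, dotProduct, Fin.sum_univ_castSucc] using congrFun hv j
  have hlast : v (Fin.last n) ≠ 0 := by
    intro h0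
    have hw : w = 0 := eq_zero_of_vecMul_eq_zero hM <| funext fun j => by
      simpa [h0, vecMul, dotProduct] using hsplit j.castSucc
    exact hv0 (funext fun i => Fin.lastCases h0 (congrFun hw) i)
  set e := -(v (Fin.last n))⁻¹ • w
  have he : e ᵥ* A.submatrix Fin.castSucc id = A (Fin.last n) := funext fun j => by
    rw [smul_vecMul, Pi.smul_apply, smul_eq_mul, eq_neg_of_add_eq_zero_left (hsplit j)]
    field_simp
  have hed : e = d := sub_eq_zero.1 <| eq_zero_of_vecMul_eq_zero hM <| by
    rw [sub_vecMul, sub_eq_zero]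
    exact funext fun j => (congrFun he j.castSucc).trans (congrFun hd j).symm
  rwa [← hed]

section Wronskian

variable {𝕜 : Type*} [RCLike 𝕜]

noncomputable def wronskianMatrix {ι : Type*} (k : ℕ) (a : ι → 𝕜 → 𝕜) (z : 𝕜) :
    Matrix ι (Fin k) 𝕜 :=
  of fun i j => iteratedDeriv j (a i) z

theorem AnalyticOnNhd.det_wronskianMatrix {k : ℕ} {a : Fin k → 𝕜 → 𝕜} {s : Set 𝕜}
    (ha : ∀ i, AnalyticOnNhd 𝕜 (a i) s) :
    AnalyticOnNhd 𝕜 (fun z => (wronskianMatrix k a z).det) s :=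
  AnalyticOnNhd.matrix_det fun i j => (ha i).iteratedDeriv j

variable {n : ℕ} {a : Fin (n + 1) → 𝕜 → 𝕜}

/-- Cramer's-rule coefficients of `a n` in terms of `a 0, …, a (n-1)`; meaningful only where the
Wronskian of `a 0, …, a (n-1)` is nonzero, the inverse being junk elsewhere. -/
noncomputable def wronskianCoeff (a : Fin (n + 1) → 𝕜 → 𝕜) (z : 𝕜) : Fin n → 𝕜 :=
  (fun j : Fin n => iteratedDeriv j (a (Fin.last n)) z) ᵥ*
    (wronskianMatrix n (fun i => a i.castSucc) z)⁻¹

theorem sum_wronskianCoeff_mul_iteratedDeriv {z : 𝕜}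
    (hW : (wronskianMatrix (n + 1) a z).det = 0)
    (hW' : (wronskianMatrix n (fun i => a i.castSucc) z).det ≠ 0) {k : ℕ} (hk : k ≤ n) :
    ∑ i, wronskianCoeff a z i * iteratedDeriv k (a i.castSucc) z =
      iteratedDeriv k (a (Fin.last n)) z := by
  have hsolve : wronskianCoeff a z ᵥ* wronskianMatrix n (fun i => a i.castSucc) z =
      fun j : Fin n => iteratedDeriv j (a (Fin.last n)) z := by
    rw [wronskianCoeff, vecMul_vecMul, nonsing_inv_mul _ hW'.isUnit, vecMul_one]
  exact congrFun (vecMul_submatrix_castSucc_eq_of_det_eq_zero hW hW' hsolve) ⟨k, by omega⟩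

theorem analyticOnNhd_wronskianCoeff {s : Set 𝕜} (ha : ∀ i, AnalyticOnNhd 𝕜 (a i) s)
    (hW' : ∀ z ∈ s, (wronskianMatrix n (fun i => a i.castSucc) z).det ≠ 0) (i : Fin n) :
    AnalyticOnNhd 𝕜 (fun z => wronskianCoeff a z i) s := by
  simp only [wronskianCoeff, vecMul, dotProduct]
  exact Finset.analyticOnNhd_fun_sum _ fun j _ => ((ha _).iteratedDeriv j).mul <|
    AnalyticOnNhd.matrix_inv (A := wronskianMatrix n fun i : Fin n => a i.castSucc)
      (fun k l => (ha k.castSucc).iteratedDeriv l) hW' j i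

theorem deriv_wronskianCoeff_eq_zero {V : Set 𝕜} (hV : IsOpen V)
    (ha : ∀ i, AnalyticOnNhd 𝕜 (a i) V)
    (hW : ∀ z ∈ V, (wronskianMatrix (n + 1) a z).det = 0)
    (hW' : ∀ z ∈ V, (wronskianMatrix n (fun i => a i.castSucc) z).det ≠ 0)
    {z : 𝕜} (hz : z ∈ V) (i : Fin n) :
    deriv (fun w => wronskianCoeff a w i) z = 0 := by
  have hcoeff := analyticOnNhd_wronskianCoeff ha hW'
  refine congrFun (eq_zero_of_vecMul_eq_zero (hW' z hz)
    (v := fun i => deriv (fun w => wronskianCoeff a w i) z) (funext fun k => ?_)) i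
  refine sum_deriv_mul_eq_zero_of_eventuallyEq (g := iteratedDeriv k (a (Fin.last n)))
    (fun i => (hcoeff i z hz).differentiableAt)
    (fun i => ((ha _).iteratedDeriv k z hz).differentiableAt) ?_ ?_
  · filter_upwards [hV.mem_nhds hz] with w hw
    exact sum_wronskianCoeff_mul_iteratedDeriv (hW w hw) (hW' w hw) k.is_lt.le
  · simp only [← iteratedDeriv_succ]
    exact sum_wronskianCoeff_mul_iteratedDeriv (hW z hz) (hW' z hz) k.is_lt

theorem eventually_eq_sum_of_wronskian_eq_zero {U : Set 𝕜} (hU : IsOpen U)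
    (ha : ∀ i, AnalyticOnNhd 𝕜 (a i) U)
    (hW : ∀ z ∈ U, (wronskianMatrix (n + 1) a z).det = 0) {z₀ : 𝕜} (hz₀ : z₀ ∈ U)
    (hW' : (wronskianMatrix n (fun i => a i.castSucc) z₀).det ≠ 0) :
    ∃ d : Fin n → 𝕜, ∀ᶠ z in 𝓝 z₀, a (Fin.last n) z = ∑ i, d i * a i.castSucc z := by
  set V := U ∩ (fun z => (wronskianMatrix n (fun i => a i.castSucc) z).det) ⁻¹' {0}ᶜ
  have hV : IsOpen V := (AnalyticOnNhd.det_wronskianMatrix fun i => ha i.castSucc).continuousOn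
    |>.isOpen_inter_preimage hU isOpen_compl_singleton
  have haV i : AnalyticOnNhd 𝕜 (a i) V := (ha i).mono Set.inter_subset_left
  have hWV z (hz : z ∈ V) := hW z hz.1
  have hW'V z (hz : z ∈ V) : (wronskianMatrix n (fun i => a i.castSucc) z).det ≠ 0 := hz.2
  obtain ⟨r, hr, hball⟩ := Metric.isOpen_iff.1 hV z₀ ⟨hz₀, hW'⟩
  refine ⟨wronskianCoeff a z₀, eventually_of_mem (Metric.ball_mem_nhds z₀ hr) fun z hz => ?_⟩
  have hconst i : wronskianCoeff a z i = wronskianCoeff a z₀ i :=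
    Metric.isOpen_ball.is_const_of_deriv_eq_zero (convex_ball z₀ r).isPreconnected
      (fun w hw => (analyticOnNhd_wronskianCoeff haV hW'V i w (hball hw)).differentiableAt
        |>.differentiableWithinAt)
      (fun w hw => deriv_wronskianCoeff_eq_zero hV haV hWV hW'V (hball hw) i) hz
      (Metric.mem_ball_self hr)
  simpa [hconst] using
    (sum_wronskianCoeff_mul_iteratedDeriv (hWV z (hball hz)) (hW'V z (hball hz)) n.zero_le).symm

end Wronskian

theorem stmt_1_general (n : ℕ) (U : Set ℂ) (hUo : IsOpen U) (hUc : IsConnected U)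
    (a : Fin n → ℂ → ℂ) (ha : ∀ i, AnalyticOnNhd ℂ (a i) U)
    (hW : ∀ z ∈ U,
      Matrix.det (Matrix.of fun i j : Fin n => iteratedDeriv (j : ℕ) (a i) z) = 0) :
    ∃ c : Fin n → ℂ, c ≠ 0 ∧ ∀ z ∈ U, ∑ i, c i * a i z = 0 := by
  induction n with
  | zero =>
    obtain ⟨z, hz⟩ := hUc.nonempty
    simpa using hW z hz
  | succ n ih =>
    by_cases hW' : ∀ z ∈ U, (wronskianMatrix n (fun i => a i.castSucc) z).det = 0
    · obtain ⟨c, hc0, hc⟩ := ih (fun i => a i.castSucc) (fun i => ha _) hW'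
      refine ⟨Fin.snoc c 0, fun h => hc0 (funext fun i => ?_), fun z hz => ?_⟩
      · simpa using congrFun h i.castSucc
      · simpa [Fin.sum_univ_castSucc] using hc z hz
    · push Not at hW'
      obtain ⟨z₀, hz₀, hz₀W⟩ := hW'
      obtain ⟨d, hd⟩ := eventually_eq_sum_of_wronskian_eq_zero hUo ha hW hz₀ hz₀W
      have hdU : Set.EqOn (a (Fin.last n)) (fun z => ∑ i, d i * a i.castSucc z) U :=
        (ha _).eqOn_of_preconnected_of_eventuallyEq
          (Finset.analyticOnNhd_fun_sum _ fun i _ => analyticOnNhd_const.mul (ha _))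
          hUc.isPreconnected hz₀ hd
      refine ⟨Fin.snoc (-d) 1, fun h => by simpa using congrFun h (Fin.last n), fun z hz => ?_⟩
      simp [Fin.sum_univ_castSucc, hdU hz]

/-- **Vanishing Wronskian implies linear dependence.**
If `a 0, …, a (n-1)` are holomorphic on a connected open set `U ⊆ ℂ` and the
Wronskian determinant `det (a i ^{(j)})_{i,j}` (the `(i,j)` entry being the `j`-th
derivative of `a i`, `0 ≤ j ≤ n-1`) vanishes identically on `U`, then the functions
are linearly dependent over `ℂ`: there is a nonzero vector of constants `c` with
`∑ i, c i • a i ≡ 0` on `U`. -/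
theorem stmt_1 (n : ℕ) (hn : 1 ≤ n) (U : Set ℂ) (hUo : IsOpen U) (hUc : IsConnected U)
    (a : Fin n → ℂ → ℂ) (ha : ∀ i, AnalyticOnNhd ℂ (a i) U)
    (hW : ∀ z ∈ U,
      Matrix.det (Matrix.of fun i j : Fin n => iteratedDeriv (j : ℕ) (a i) z) = 0) :
    ∃ c : Fin n → ℂ, c ≠ 0 ∧ ∀ z ∈ U, ∑ i, c i * a i z = 0 :=
  stmt_1_general n U hUo hUc a ha hW
end

section
/- Let $d, n \geq 1$ and let $P: \mathbb{C}^d \to \mathbb{C}^d$ be given componentwise by $P(\boldsymbol{v})_m = v_m^n + \sum_{i=1}^{n-1} v_m^{n-i-1} f_i(\boldsymbol{v})_m$, where each $f_i: \mathbb{C}^d \to \mathbb{C}^d$ is a polynomial map each of whose components is a polynomial of total degree at most $i$ in $v_1, \dots, v_d$. Then $P$ has at least one zero in $\mathbb{C}^d$, and the zero set $P^{-1}(0)$ is finite. -/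
/-!
Write `P m = X m ^ n + q m` with `deg (q m) < n` and let `I` be the ideal generated by the `P m`.
Modulo `I` a monomial divisible by some `X m ^ n` is congruent to a combination of monomials of
lower degree, so `ℂ[X] ⧸ I` is spanned by the finitely many monomials with all exponents `< n`.
Hence every `X m` is integral over `ℂ` modulo `I`, and the coordinates of the common zeros lie in
finite root sets. By the Nullstellensatz a common zero exists as soon as `1 ∉ I`. Suppose
`∑ g m * P m = 1` with `deg (g m) ≤ D`; the part of degree `D + n` is a relation
`∑ c m * X m ^ n = 0` among the top components `c m` of the `g m`. As the `X m ^ n` form a regular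
sequence, this relation is a combination of Koszul relations: `c m = ∑ k, h m k * X k ^ n` with
`h` alternating. Replacing `g k` by `g k - c k + ∑ m, h m k * q m` keeps `∑ g m * P m = 1` and
lowers `D`, and at `D = 0` this is absurd.
-/

open MvPolynomial Finset

theorem Finsupp.degree_tsub_single_add {σ : Type*} {α : σ →₀ ℕ} {m : σ} {k : ℕ}
    (h : k ≤ α m) :
    (α - Finsupp.single m k).degree + k = α.degree := by
  conv_rhs => rw [← tsub_add_cancel_of_le (Finsupp.single_le_iff.mpr h)]
  rw [map_add, Finsupp.degree_single]

section Alternating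

variable {A ι : Type*} [CommRing A] [Fintype ι] {h : ι → ι → A}

theorem sum_sum_mul_mul_eq_zero_of_alternating (h_anti : ∀ i j, h i j = -h j i)
    (h_diag : ∀ i, h i i = 0) (y : ι → A) : ∑ i, ∑ j, h i j * (y i * y j) = 0 := by
  rw [← Finset.sum_product']
  refine sum_involution (fun p _ => p.swap) (fun ⟨i, j⟩ _ => ?_)
    (fun ⟨i, j⟩ _ hne heq => ?_) (fun p _ => mem_product.2 ⟨mem_univ _, mem_univ _⟩)
    (fun p _ => p.swap_swap)
  · rw [Prod.fst_swap, Prod.snd_swap, h_anti i j]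
    ring
  · obtain rfl : j = i := congrArg Prod.fst heq
    exact hne (by rw [h_diag, zero_mul])

theorem sum_sub_add_sum_mul_add_eq_of_alternating (h_anti : ∀ i j, h i j = -h j i)
    (h_diag : ∀ i, h i i = 0) {x c : ι → A} (hc : ∀ i, c i = ∑ j, h i j * x j)
    (g q : ι → A) :
    ∑ j, (g j - c j + ∑ i, h i j * q i) * (x j + q j) = ∑ j, g j * (x j + q j) := by
  have hcx : ∑ j, c j * x j = 0 := by
    simp_rw [hc, sum_mul]
    rw [← sum_sum_mul_mul_eq_zero_of_alternating h_anti h_diag x]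
    exact sum_congr rfl fun i _ => sum_congr rfl fun j _ => by ring
  have hqq : ∑ j, (∑ i, h i j * q i) * q j = 0 := by
    simp_rw [sum_mul]
    rw [sum_comm, ← sum_sum_mul_mul_eq_zero_of_alternating h_anti h_diag q]
    exact sum_congr rfl fun i _ => sum_congr rfl fun j _ => by ring
  have hcq : ∑ j, c j * q j = ∑ j, (∑ i, h i j * q i) * x j := by
    simp_rw [hc, sum_mul]
    rw [sum_comm]
    exact sum_congr rfl fun i _ => sum_congr rfl fun j _ => by ring
  simp only [add_mul, sub_mul, mul_add, sum_add_distrib, sum_sub_distrib]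
  linear_combination hqq - hcx - hcq

end Alternating

namespace MvPolynomial

variable {R σ : Type*} [CommRing R] {n : ℕ}

theorem degree_le_totalDegree {p : MvPolynomial σ R} {α : σ →₀ ℕ} (h : α ∈ p.support) :
    α.degree ≤ p.totalDegree :=
  le_totalDegree h

theorem homogeneousComponent_add_mul_X_pow (D : ℕ) (m : σ) (p : MvPolynomial σ R) :
    homogeneousComponent (D + n) (p * X m ^ n) = homogeneousComponent D p * X m ^ n := by
  ext α
  rw [coeff_homogeneousComponent, X_pow_eq_monomial, coeff_mul_monomial', coeff_mul_monomial']
  by_cases hle : Finsupp.single m n ≤ α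
  · have hdeg := Finsupp.degree_tsub_single_add (Finsupp.single_le_iff.mp hle)
    simp only [if_pos hle, coeff_homogeneousComponent]
    split_ifs <;> first | rfl | omega | simp
  · simp only [if_neg hle, ite_self]

theorem mem_span_X_pow_iff {s : Set σ} {p : MvPolynomial σ R} :
    p ∈ Ideal.span ((fun m => X m ^ n) '' s) ↔
      ∀ α ∈ p.support, ∃ m ∈ s, n ≤ α m := by
  have : (fun m => (X m ^ n : MvPolynomial σ R)) '' s =
      (fun α => monomial α 1) '' ((fun m => Finsupp.single m n) '' s) := by
    rw [Set.image_image]; simp only [X_pow_eq_monomial]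
  simp only [this, mem_ideal_span_monomial_image, Set.exists_mem_image, Finsupp.single_le_iff]

theorem mem_span_X_pow_of_mul_X_pow_mem {s : Set σ} {a : σ} (ha : a ∉ s) {p : MvPolynomial σ R}
    (hp : p * X a ^ n ∈ Ideal.span ((fun m => X m ^ n) '' s)) :
    p ∈ Ideal.span ((fun m => X m ^ n) '' s) := by
  rw [mem_span_X_pow_iff] at hp ⊢
  intro α hα
  obtain ⟨m, hm, hle⟩ := hp (α + Finsupp.single a n) (by
    rwa [mem_support_iff, X_pow_eq_monomial, coeff_mul_monomial, mul_one, ← mem_support_iff])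
  have hma : a ≠ m := fun h => ha (h ▸ hm)
  exact ⟨m, hm, by simpa [Finsupp.single_apply, hma] using hle⟩

theorem eq_zero_of_mem_span_X_pow {s : Set σ} {p : MvPolynomial σ R} {D : ℕ}
    (hp : p.IsHomogeneous D) (hD : D < n) (hmem : p ∈ Ideal.span ((fun m => X m ^ n) '' s)) :
    p = 0 := by
  rw [mem_span_X_pow_iff] at hmem
  refine support_eq_empty.mp (eq_empty_of_forall_notMem fun α hα => ?_)
  obtain ⟨m, -, hm⟩ := hmem α hα
  have hdeg : α.degree = D := by
    rw [Finsupp.degree_eq_weight_one]; exact hp (mem_support_iff.mp hα)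
  have := Finsupp.le_degree m α
  omega

theorem exists_isHomogeneous_of_mem_span_X_pow {t : Finset σ} {p : MvPolynomial σ R} {D : ℕ}
    (hp : p.IsHomogeneous (D + n)) (hmem : p ∈ Ideal.span ((fun m => X m ^ n) '' (t : Set σ))) :
    ∃ b : σ → MvPolynomial σ R, (∀ k, (b k).IsHomogeneous D) ∧
      p = ∑ k ∈ t, b k * X k ^ n := by
  obtain ⟨b, hb⟩ := (Submodule.mem_span_image_finset_iff_exists_fun' _).mp hmem
  refine ⟨fun k => homogeneousComponent D (b k),
    fun k => homogeneousComponent_isHomogeneous _ _, ?_⟩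
  rw [← homogeneousComponent_eq_self hp, ← hb, map_sum]
  exact sum_congr rfl fun k _ => homogeneousComponent_add_mul_X_pow D k (b k)

theorem mem_span_X_pow_of_mul_X_pow_add_sum_eq_zero {s : Finset σ} {a : σ} (ha : a ∉ s)
    {c : σ → MvPolynomial σ R} (hsum : c a * X a ^ n + ∑ m ∈ s, c m * X m ^ n = 0) :
    c a ∈ Ideal.span ((fun m => X m ^ n) '' (s : Set σ)) := by
  refine mem_span_X_pow_of_mul_X_pow_mem (by exact_mod_cast ha) ?_
  rw [eq_neg_of_add_eq_zero_left hsum]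
  exact neg_mem (Ideal.sum_mem _ fun m hm =>
    Ideal.mul_mem_left _ _ (Ideal.subset_span ⟨m, hm, rfl⟩))

theorem exists_alternating_of_sum_mul_X_pow_eq_zero [DecidableEq σ] {D : ℕ} (t : Finset σ)
    (c : σ → MvPolynomial σ R) (hc : ∀ m, (c m).IsHomogeneous (D + n))
    (hsum : ∑ m ∈ t, c m * X m ^ n = 0) :
    ∃ h : σ → σ → MvPolynomial σ R, (∀ m k, h m k = -h k m) ∧ (∀ m, h m m = 0) ∧
      (∀ m k, (h m k).IsHomogeneous D) ∧ ∀ m ∈ t, c m = ∑ k ∈ t, h m k * X k ^ n := by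
  induction t using Finset.induction generalizing c with
  | empty => exact ⟨0, by simp, by simp, fun _ _ => isHomogeneous_zero _ _ _, by simp⟩
  | @insert a s ha ih =>
    rw [sum_insert ha] at hsum
    obtain ⟨b, hb, hca⟩ := exists_isHomogeneous_of_mem_span_X_pow (hc a)
      (mem_span_X_pow_of_mul_X_pow_add_sum_eq_zero ha hsum)
    -- add the Koszul relations `b m • (X a ^ n • e m - X m ^ n • e a)` to kill entry `a`
    obtain ⟨h, h_anti, h_diag, h_hom, h_rep⟩ := ih (fun m => c m + b m * X a ^ n)
      (fun m => (hc m).add ((hb m).mul (isHomogeneous_X_pow a n))) (by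
        have : ∑ m ∈ s, b m * X a ^ n * X m ^ n = c a * X a ^ n := by
          rw [hca, sum_mul]
          exact sum_congr rfl fun m _ => by ring
        simp only [add_mul, sum_add_distrib, this]
        linear_combination hsum)
    have hs : ∀ k ∈ s, k ≠ a := fun k hk hka => ha (hka ▸ hk)
    refine ⟨fun m k => if m = a then (if k = a then 0 else b k)
      else if k = a then -b m else h m k, fun m k => ?_, fun m => ?_, fun m k => ?_, ?_⟩
    · by_cases hma : m = a <;> by_cases hka : k = a <;> simp [hma, hka, h_anti m k]
    · by_cases hma : m = a <;> simp [hma, h_diag]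
    · dsimp only
      split_ifs
      exacts [isHomogeneous_zero _ _ _, hb k, (hb m).neg, h_hom m k]
    · intro m hm
      rw [sum_insert ha]
      dsimp only
      rcases mem_insert.mp hm with rfl | hm
      · simp only [↓reduceIte, zero_mul, zero_add, hca]
        exact sum_congr rfl fun k hk => by rw [if_neg (hs k hk)]
      · rw [if_neg (hs m hm), if_pos rfl, sum_congr rfl fun k hk => by rw [if_neg (hs m hm),
          if_neg (hs k hk)], ← h_rep m hm]
        ring

theorem exists_alternating_of_sum_univ_mul_X_pow_eq_zero [Fintype σ] {D : ℕ}
    (c : σ → MvPolynomial σ R) (hc : ∀ m, (c m).IsHomogeneous D)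
    (hsum : ∑ m, c m * X m ^ n = 0) :
    ∃ h : σ → σ → MvPolynomial σ R, (∀ m k, h m k = -h k m) ∧ (∀ m, h m m = 0) ∧
      (∀ m k, h m k = 0 ∨ (h m k).totalDegree + n ≤ D) ∧
      ∀ m, c m = ∑ k, h m k * X k ^ n := by
  classical
  rcases lt_or_ge D n with hD | hD
  · refine ⟨0, fun _ _ => by simp, fun _ => rfl, fun _ _ => Or.inl rfl, fun m => ?_⟩
    rw [← insert_erase (mem_univ m), sum_insert (notMem_erase m _)] at hsum
    simpa using eq_zero_of_mem_span_X_pow (hc m) hD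
      (mem_span_X_pow_of_mul_X_pow_add_sum_eq_zero (notMem_erase m _) hsum)
  · obtain ⟨E, rfl⟩ := Nat.exists_eq_add_of_le' hD
    obtain ⟨h, h_anti, h_diag, h_hom, h_rep⟩ :=
      exists_alternating_of_sum_mul_X_pow_eq_zero univ c hc hsum
    exact ⟨h, h_anti, h_diag, fun m k => Or.inr (by linarith [(h_hom m k).totalDegree_le]),
      fun m => h_rep m (mem_univ m)⟩

theorem totalDegree_sub_homogeneousComponent_le {p : MvPolynomial σ R} {D : ℕ}
    (hp : p.totalDegree ≤ D) : (p - homogeneousComponent D p).totalDegree ≤ D - 1 := by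
  refine Finset.sup_le fun α hα => ?_
  rw [mem_support_iff, coeff_sub, coeff_homogeneousComponent] at hα
  split_ifs at hα with hαD
  · simp at hα
  · have := degree_le_totalDegree (mem_support_iff.mpr (by simpa using hα))
    change α.degree ≤ D - 1
    omega

theorem sum_mul_X_pow_add_ne_one [Nontrivial R] [Fintype σ] {q : σ → MvPolynomial σ R}
    (hq : ∀ m, (q m).totalDegree < n) (D : ℕ) (g : σ → MvPolynomial σ R)
    (hg : ∀ m, (g m).totalDegree ≤ D) : ∑ m, g m * (X m ^ n + q m) ≠ 1 := by
  intro hsum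
  have hn : 0 < n := by
    rcases isEmpty_or_nonempty σ with hσ | ⟨⟨m⟩⟩
    · simp at hsum
    · exact (Nat.zero_le _).trans_lt (hq m)
  induction D using Nat.strong_induction_on generalizing g with
  | _ D ih =>
  set c := fun m => homogeneousComponent D (g m)
  have hc : ∑ m, c m * X m ^ n = 0 := by
    have h := congrArg (homogeneousComponent (D + n)) hsum
    rw [map_sum, homogeneousComponent_eq_zero _ _ (by rw [totalDegree_one]; omega)] at h
    rw [← h]
    refine sum_congr rfl fun m _ => ?_
    have hgq : (g m * q m).totalDegree < D + n := by
      linarith [totalDegree_mul (g m) (q m), hg m, hq m]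
    rw [mul_add, map_add, homogeneousComponent_add_mul_X_pow,
      homogeneousComponent_eq_zero _ _ hgq, add_zero]
  obtain ⟨h, h_anti, h_diag, h_deg, h_rep⟩ := exists_alternating_of_sum_univ_mul_X_pow_eq_zero c
    (fun m => homogeneousComponent_isHomogeneous _ _) hc
  rcases Nat.eq_zero_or_pos D with rfl | hD
  · have hg0 : ∀ m, g m = 0 := fun m => by
      have hcm : c m = 0 := by
        rw [h_rep m]
        exact sum_eq_zero fun k _ => by rw [(h_deg m k).resolve_right (by omega), zero_mul]
      rwa [← homogeneousComponent_eq_self (isHomogeneous_of_totalDegree_zero σ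
        (Nat.le_zero.mp (hg m)))]
    simp [hg0] at hsum
  · refine ih (D - 1) (by omega) (fun k => g k - c k + ∑ m, h m k * q m) (fun k => ?_)
      ((sum_sub_add_sum_mul_add_eq_of_alternating (x := fun k => X k ^ n) h_anti h_diag
        h_rep g q).trans hsum)
    refine (totalDegree_add _ _).trans (max_le (totalDegree_sub_homogeneousComponent_le (hg k))
      ((totalDegree_finsetSum _ _).trans (Finset.sup_le fun m _ => ?_)))
    rcases h_deg m k with h0 | h_le
    · simp [h0]
    · have := totalDegree_mul (h m k) (q m)
      have := hq m
      omega

theorem span_range_X_pow_add_ne_top [Nontrivial R] [Fintype σ] {q : σ → MvPolynomial σ R}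
    (hq : ∀ m, (q m).totalDegree < n) :
    Ideal.span (Set.range fun m => X m ^ n + q m) ≠ ⊤ := by
  rw [Ne, Ideal.eq_top_iff_one, Ideal.mem_span_range_iff_exists_fun]
  rintro ⟨g, hg⟩
  exact sum_mul_X_pow_add_ne_one hq _ g (fun m => le_sup (f := fun m => (g m).totalDegree)
    (mem_univ m)) hg

theorem mem_of_forall_monomial_one_mem (S : Submodule R (MvPolynomial σ R)) {p : MvPolynomial σ R}
    (h : ∀ α ∈ p.support, monomial α 1 ∈ S) : p ∈ S := by
  rw [p.as_sum]
  refine S.sum_mem fun α hα => ?_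
  rw [← mul_one (coeff α p), ← smul_eq_mul, ← smul_monomial]
  exact S.smul_mem _ (h α hα)

theorem finite_quotient_span_range_X_pow_add [Finite σ] {q : σ → MvPolynomial σ R}
    (hq : ∀ m, (q m).totalDegree < n) :
    Module.Finite R (MvPolynomial σ R ⧸ Ideal.span (Set.range fun m => X m ^ n + q m)) := by
  set I := Ideal.span (Set.range fun m => X m ^ n + q m)
  set box := {α : σ →₀ ℕ | ∀ m, α m < n}
  have hbox : box.Finite := by
    refine Set.Finite.of_finite_image ((Set.Finite.pi' fun _ => Set.finite_Iio n).subset ?_)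
      DFunLike.coe_injective.injOn
    rintro _ ⟨α, hα, rfl⟩
    exact hα
  set B := (fun α => Ideal.Quotient.mk I (monomial α 1)) '' box
  set S := (Submodule.span R B).comap (Ideal.Quotient.mkₐ R I).toLinearMap
  have hIS : ∀ p ∈ I, p ∈ S := fun p hp => by
    simp [S, Ideal.Quotient.eq_zero_iff_mem.mpr hp]
  have hmono : ∀ α, monomial α 1 ∈ S := by
    intro α
    induction hN : α.degree using Nat.strong_induction_on generalizing α with
    | _ N ih =>
    by_cases hα : α ∈ box
    · exact Submodule.subset_span ⟨α, hα, rfl⟩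
    obtain ⟨m, hm⟩ : ∃ m, n ≤ α m := by simpa [box] using hα
    have hα_eq : monomial α (1 : R) =
        monomial (α - Finsupp.single m n) 1 * (X m ^ n + q m) -
          monomial (α - Finsupp.single m n) 1 * q m := by
      rw [mul_add, X_pow_eq_monomial, monomial_mul, mul_one,
        tsub_add_cancel_of_le (Finsupp.single_le_iff.mpr hm), add_sub_cancel_right]
    rw [hα_eq]
    refine S.sub_mem (hIS _ (I.mul_mem_left _ (Ideal.subset_span ⟨m, rfl⟩)))
      (mem_of_forall_monomial_one_mem S fun γ hγ => ih γ.degree ?_ γ rfl)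
    have := degree_le_totalDegree hγ
    have := totalDegree_mul (monomial (α - Finsupp.single m n) (1 : R)) (q m)
    have := Finsupp.degree_tsub_single_add hm
    have : (monomial (α - Finsupp.single m n) (1 : R)).totalDegree ≤
        (α - Finsupp.single m n).degree := totalDegree_monomial_le _ _
    have := hq m
    omega
  refine ⟨Submodule.fg_def.mpr ⟨B, hbox.image _, eq_top_iff.mpr fun x _ => ?_⟩⟩
  obtain ⟨p, rfl⟩ := Ideal.Quotient.mk_surjective x
  exact mem_of_forall_monomial_one_mem S fun α _ => hmono α

section Field

variable {k : Type*} [Field k] [Finite σ]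

theorem zeroLocus_nonempty_of_ne_top [IsAlgClosed k] {I : Ideal (MvPolynomial σ k)}
    (hI : I ≠ ⊤) :
    (zeroLocus k I).Nonempty := by
  obtain ⟨J, hJ, hIJ⟩ := Ideal.exists_le_maximal I hI
  obtain ⟨x, rfl⟩ := eq_vanishingIdeal_singleton_of_isMaximal k hJ
  exact ⟨x, fun p hp => (mem_vanishingIdeal_singleton_iff x p).mp (hIJ hp)⟩

theorem finite_zeroLocus_of_finite_quotient (I : Ideal (MvPolynomial σ k))
    [Module.Finite k (MvPolynomial σ k ⧸ I)] : (zeroLocus k I).Finite := by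
  have hroot : ∀ m : σ, ∃ p : Polynomial k, p ≠ 0 ∧ Polynomial.aeval (X m) p ∈ I :=
    fun m => by
    obtain ⟨p, hmonic, hp⟩ := IsIntegral.of_finite k (Ideal.Quotient.mk I (X m))
    refine ⟨p, hmonic.ne_zero, Ideal.Quotient.eq_zero_iff_mem.mp ?_⟩
    rw [← Ideal.Quotient.mkₐ_eq_mk k, ← Polynomial.aeval_algHom_apply]
    exact hp
  choose p hp0 hpI using hroot
  refine (Set.Finite.pi' fun m => Polynomial.finite_setOfPred_isRoot (hp0 m)).subset
    fun x hx m => ?_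
  have := hx _ (hpI m)
  rw [← Polynomial.aeval_algHom_apply, aeval_X] at this
  simpa using this

end Field

end MvPolynomial

theorem stmt_3_general (d n : ℕ) (hn : 1 ≤ n)
    (f : ℕ → Fin d → MvPolynomial (Fin d) ℂ)
    (hf : ∀ i, 1 ≤ i → i ≤ n - 1 → ∀ m, (f i m).totalDegree ≤ i) :
    (∃ v : Fin d → ℂ, ∀ m : Fin d,
        v m ^ n + ∑ i ∈ Finset.Icc 1 (n - 1),
          v m ^ (n - i - 1) * MvPolynomial.eval v (f i m) = 0) ∧
    Set.Finite {v : Fin d → ℂ | ∀ m : Fin d,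
        v m ^ n + ∑ i ∈ Finset.Icc 1 (n - 1),
          v m ^ (n - i - 1) * MvPolynomial.eval v (f i m) = 0} := by
  set q : Fin d → MvPolynomial (Fin d) ℂ :=
    fun m => ∑ i ∈ Icc 1 (n - 1), X m ^ (n - i - 1) * f i m
  have hq : ∀ m, (q m).totalDegree < n := fun m => by
    refine lt_of_le_of_lt ((totalDegree_finsetSum _ _).trans (Finset.sup_le fun i hi => ?_))
      (Nat.sub_lt hn one_pos)
    obtain ⟨hi1, hi2⟩ := mem_Icc.mp hi
    have := totalDegree_mul (X m ^ (n - i - 1)) (f i m)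
    rw [totalDegree_X_pow] at this
    have := hf i hi1 hi2 m
    omega
  have hzero : ∀ v : Fin d → ℂ,
      v ∈ zeroLocus ℂ (Ideal.span (Set.range fun m => X m ^ n + q m)) ↔
        ∀ m, v m ^ n + ∑ i ∈ Icc 1 (n - 1), v m ^ (n - i - 1) * eval v (f i m) = 0 := by
    simp [zeroLocus_span, q]
  have := finite_quotient_span_range_X_pow_add hq
  obtain ⟨v, hv⟩ := zeroLocus_nonempty_of_ne_top (span_range_X_pow_add_ne_top hq)
  exact ⟨⟨v, (hzero v).mp hv⟩,
    (finite_zeroLocus_of_finite_quotient _).subset fun v hv => (hzero v).mpr hv⟩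

/-- **Existence and finiteness of zeros of the dominant polynomial system.**
Let `P : ℂᵈ → ℂᵈ` be given componentwise by
`P(v)_m = v_m ^ n + ∑_{i=1}^{n-1} v_m ^ (n-i-1) * f_i(v)_m`,
where each component of `f_i` is a polynomial of total degree at most `i` in
`v_1, …, v_d`.  Then `P` has at least one zero in `ℂᵈ`, and its zero set is finite. -/
theorem stmt_3 (d n : ℕ) (hd : 1 ≤ d) (hn : 1 ≤ n)
    (f : ℕ → Fin d → MvPolynomial (Fin d) ℂ)
    (hf : ∀ i, 1 ≤ i → i ≤ n - 1 → ∀ m, (f i m).totalDegree ≤ i) :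
    (∃ v : Fin d → ℂ, ∀ m : Fin d,
        v m ^ n + ∑ i ∈ Finset.Icc 1 (n - 1),
          v m ^ (n - i - 1) * MvPolynomial.eval v (f i m) = 0) ∧
    Set.Finite {v : Fin d → ℂ | ∀ m : Fin d,
        v m ^ n + ∑ i ∈ Finset.Icc 1 (n - 1),
          v m ^ (n - i - 1) * MvPolynomial.eval v (f i m) = 0} :=
  stmt_3_general d n hn f hf
end
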